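/- Evenness and nonnegativity of the z-exponent of the Bollobás–Riordan polynomial. Let G = (H, σ, θ) be a combinatorial map encoding an orientable ribbon graph. Then for every subset F ⊆ E, the integer k(F) − bc(F) + n(F) is nonnegative and even (it equals twice the genus of the orientable surface F). -/

import Mathlib

open Finset
open scoped Classical

/-- The permutation `θ_F` acting as `θ` on the half-edges belonging to edges of the
spanning subgraph (encoded by the `θ`-invariant set `S` of half-edges) and as the
identity elsewhere.  Defined whenever `S` is `θ`-invariant and `θ` is an involution
(and as the identity permutation otherwise). -/
noncomputable def restrictPerm {H : Type*} [DecidableEq H] (θ : Equiv.Perm H) (S : Finset H) :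
    Equiv.Perm H :=
  if hcl : (∀ a ∈ S, θ a ∈ S) ∧ (∀ a, θ (θ a) = a) then
    { toFun := fun a => if a ∈ S then θ a else a
      invFun := fun a => if a ∈ S then θ a else a
      left_inv := fun a => by
        by_cases h : a ∈ S
        · simp [h, hcl.1 a h, hcl.2 a]
        · simp [h]
      right_inv := fun a => by
        by_cases h : a ∈ S
        · simp [h, hcl.1 a h, hcl.2 a]
        · simp [h] }
  else 1

/-- The number of orbits of the cyclic group generated by a permutation. -/
noncomputable def permOrbits {H : Type*} [Fintype H] (π : Equiv.Perm H) : ℕ :=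
  Nat.card (MulAction.orbitRel.Quotient (Subgroup.zpowers π) H)

/-- `v(G)`: the number of vertices, i.e. the number of orbits of `σ`. -/
noncomputable def vCount {H : Type*} [Fintype H] (σ : Equiv.Perm H) : ℕ := permOrbits σ

/-- `bc(F)`: the number of boundary components of the spanning subgraph, i.e. the
number of orbits of `σ ∘ θ_F`. -/
noncomputable def bcCount {H : Type*} [Fintype H] [DecidableEq H]
    (σ θ : Equiv.Perm H) (S : Finset H) : ℕ :=
  permOrbits (σ * restrictPerm θ S)

/-- `k(F)`: the number of connected components of the spanning subgraph, i.e. the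
number of orbits of the subgroup generated by `σ` and `θ_F`. -/
noncomputable def kCount {H : Type*} [Fintype H] [DecidableEq H]
    (σ θ : Equiv.Perm H) (S : Finset H) : ℕ :=
  Nat.card (MulAction.orbitRel.Quotient
    (Subgroup.closure {σ, restrictPerm θ S} : Subgroup (Equiv.Perm H)) H)

/-- `e(F)`: the number of edges of the spanning subgraph, i.e. half the number of
half-edges in `S` (as an integer, for use in exponents). -/
def eCount {H : Type*} (S : Finset H) : ℤ := (S.card / 2 : ℕ)

/-- `r(F) = v(G) - k(F)`: the rank of the spanning subgraph. -/
noncomputable def rCount {H : Type*} [Fintype H] [DecidableEq H]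
    (σ θ : Equiv.Perm H) (S : Finset H) : ℤ :=
  (vCount σ : ℤ) - (kCount σ θ S : ℤ)

/-- `n(F) = e(F) - r(F)`: the nullity of the spanning subgraph. -/
noncomputable def nCount {H : Type*} [Fintype H] [DecidableEq H]
    (σ θ : Equiv.Perm H) (S : Finset H) : ℤ :=
  eCount S - rCount σ θ S

/-- The spanning subgraphs `F ⊆ E`, encoded as the `θ`-invariant subsets of the
set of half-edges. -/
def spanningSets {H : Type*} [Fintype H] [DecidableEq H] (θ : Equiv.Perm H) :
    Finset (Finset H) :=
  Finset.univ.filter (fun S => ∀ a ∈ S, θ a ∈ S)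

/-!
Build `F` up one edge `{a, θ a}` at a time; this replaces `θ_F` by `θ_F * swap a (θ a)` and
raises `e` by one. If `a` and `θ a` already lie in one component, `k` is unchanged and
`bc` changes by `±1`, since multiplying by a transposition splits one cycle or merges two.
Otherwise `k` drops by one, and as the cycles of `σ ∘ θ_F` lie inside components, the
transposition merges two boundary cycles. Either way `k - bc + n = 2 k - bc + e - v`
changes by `0` or `2`, and it vanishes for `F = ∅`.
-/

open Equiv Equiv.Perm MulAction Subgroup

theorem Equiv.swap_apply_iff_of_not {α : Type*} [DecidableEq α] {p : α → Prop} {a b : α}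
    (ha : ¬ p a) (hb : ¬ p b) (x : α) : p (swap a b x) ↔ p x := by
  rcases eq_or_ne x a with rfl | hxa
  · simp [ha, hb]
  rcases eq_or_ne x b with rfl | hxb
  · simp [ha, hb]
  rw [swap_apply_of_ne_of_ne hxa hxb]

namespace Setoid

variable {α : Type*} {r s : Setoid α}

theorem rel_swap_apply [DecidableEq α] {a b : α} (h : r a b) (x : α) : r (swap a b x) x := by
  rcases eq_or_ne x a with rfl | hxa
  · simpa using r.symm h
  rcases eq_or_ne x b with rfl | hxb
  · simpa using h
  rw [swap_apply_of_ne_of_ne hxa hxb]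

/-- Passing from `r` to a coarser `s` that only glues the classes of `a` and `b` together
loses exactly one class. -/
theorem card_quotient_eq_add_one [Finite α] {a b : α} (hle : r ≤ s) (hab : s a b)
    (hnab : ¬ r a b) (hiso : ∀ x y, s x y → ¬ r x a → ¬ r x b → r x y) :
    Nat.card (Quotient r) = Nat.card (Quotient s) + 1 := by
  let f (q : {q : Quotient r // q ≠ ⟦b⟧}) : Quotient s := map_of_le hle q
  have hinj : Function.Injective f := by
    rintro ⟨q, hq⟩ ⟨q', hq'⟩ hqq'
    induction q using Quotient.inductionOn with | h x => ?_
    induction q' using Quotient.inductionOn with | h y => ?_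
    have hxb : ¬ r x b := fun h => hq (Quotient.sound h)
    have hyb : ¬ r y b := fun h => hq' (Quotient.sound h)
    have hxy : s x y := Quotient.exact hqq'
    refine Subtype.ext (Quotient.sound ?_)
    by_cases hxa : r x a
    · by_cases hya : r y a
      · exact r.trans hxa (r.symm hya)
      · exact r.symm (hiso y x (s.symm hxy) hya hyb)
    · exact hiso x y hxy hxa hxb
  have hsurj : Function.Surjective f := by
    intro q
    induction q using Quotient.inductionOn with | h x => ?_
    by_cases hxb : r x b
    · exact ⟨⟨⟦a⟧, fun h => hnab (Quotient.exact h)⟩,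
        Quotient.sound (s.trans hab (s.symm (hle hxb)))⟩
    · exact ⟨⟨⟦x⟧, fun h => hxb (Quotient.exact h)⟩, rfl⟩
  rw [← Nat.card_eq_of_bijective f ⟨hinj, hsurj⟩, ← Finite.card_option,
    Nat.card_congr (Equiv.optionSubtypeNe _)]

end Setoid

namespace Equiv.Perm

variable {α : Type*} {τ : Perm α} {a b : α}

theorem sameCycle_of_pow_apply_eq {n : ℕ} (h : (τ ^ n) a = b) : τ.SameCycle a b :=
  h ▸ sameCycle_pow_right.2 (SameCycle.refl τ a)

variable [DecidableEq α]

theorem mul_swap_pow_apply_left {k : ℕ} (hk : 0 < k)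
    (hfree : ∀ i, 0 < i → i < k → (τ ^ i) b ≠ a ∧ (τ ^ i) b ≠ b) :
    ((τ * swap a b) ^ k) a = (τ ^ k) b := by
  induction k, hk using Nat.le_induction with
  | base => simp
  | succ k hk ih =>
    obtain ⟨hka, hkb⟩ := hfree k hk k.lt_succ_self
    rw [pow_succ', mul_apply, ih fun i hi hik => hfree i hi (hik.trans k.lt_succ_self),
      mul_apply, swap_apply_of_ne_of_ne hka hkb, pow_succ', mul_apply]

variable [Finite α]

theorem sameCycle_mul_swap_of_not_sameCycle (h : ¬ τ.SameCycle a b) :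
    (τ * swap a b).SameCycle a b := by
  have hper : ∃ n, 0 < n ∧ (τ ^ n) b = b :=
    ⟨orderOf τ, orderOf_pos τ, by rw [pow_orderOf_eq_one, one_apply]⟩
  obtain ⟨hpos, hret⟩ := Nat.find_spec hper
  refine sameCycle_of_pow_apply_eq ((mul_swap_pow_apply_left hpos fun i hi hik => ?_).trans hret)
  exact ⟨fun hia => h (sameCycle_of_pow_apply_eq hia).symm,
    fun hib => Nat.find_min hper hik ⟨hi, hib⟩⟩

theorem not_sameCycle_mul_swap_of_sameCycle (hab : a ≠ b) (h : τ.SameCycle a b) :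
    ¬ (τ * swap a b).SameCycle a b := by
  have hhit : ∃ n, 0 < n ∧ (τ ^ n) b = a := by
    obtain ⟨n, hn, -, hna⟩ := h.symm.exists_pow_eq''
    exact ⟨n, hn, hna⟩
  set k := Nat.find hhit
  obtain ⟨hkpos, hka⟩ := Nat.find_spec hhit
  have hfree : ∀ i, 0 < i → i < k → (τ ^ i) b ≠ a ∧ (τ ^ i) b ≠ b := by
    refine fun i hi hik => ⟨fun hia => Nat.find_min hhit hik ⟨hi, hia⟩, fun hib => ?_⟩
    refine Nat.find_min hhit (Nat.sub_lt hkpos hi) ⟨Nat.sub_pos_of_lt hik, ?_⟩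
    calc (τ ^ (k - i)) b = (τ ^ (k - i) * τ ^ i) b := by rw [mul_apply, hib]
      _ = a := by rw [← pow_add, Nat.sub_add_cancel hik.le, hka]
  -- so the `τ * swap a b`-orbit of `a` closes up after `k` steps without meeting `b`
  have hperiod : ((τ * swap a b) ^ k) a = a := (mul_swap_pow_apply_left hkpos hfree).trans hka
  have hne : ∀ i < k, ((τ * swap a b) ^ i) a ≠ b := by
    intro i hik
    rcases Nat.eq_zero_or_pos i with rfl | hi
    · exact hab
    · rw [mul_swap_pow_apply_left hi fun j hj hji => hfree j hj (hji.trans hik)]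
      exact (hfree i hi hik).2
  intro hsc
  obtain ⟨n, hn⟩ := hsc.exists_nat_pow_eq
  refine hne (n % k) (Nat.mod_lt n hkpos) ?_
  calc ((τ * swap a b) ^ (n % k)) a
      = ((τ * swap a b) ^ (n % k)) ((((τ * swap a b) ^ k) ^ (n / k)) a) := by
        rw [pow_apply_eq_self_of_apply_eq_self hperiod]
    _ = b := by rw [← mul_apply, ← pow_mul, ← pow_add, Nat.mod_add_div, hn]

end Equiv.Perm

section Orbits

variable {α : Type*}

theorem orbitRel_closure_of_mem {S : Set (Perm α)} {g : Perm α} (hg : g ∈ S) (x : α) :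
    orbitRel (closure S) α (g x) x :=
  ⟨⟨g, subset_closure hg⟩, rfl⟩

theorem orbitRel_closure_le {S : Set (Perm α)} {r : Setoid α} (h : ∀ g ∈ S, ∀ x, r (g x) x) :
    orbitRel (closure S) α ≤ r := by
  have hmem : ∀ g ∈ closure S, ∀ x, r (g x) x := by
    intro g hg
    induction hg using closure_induction with
    | mem g hg => exact h g hg
    | one => exact r.refl
    | mul g g' _ _ hg hg' => exact fun x => r.trans (hg (g' x)) (hg' x)
    | inv g _ hg => exact fun x => r.symm (by simpa using hg (g⁻¹ x))
  rintro x y ⟨⟨g, hg⟩, rfl⟩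
  exact hmem g hg y

theorem orbitRel_zpowers (τ : Perm α) : orbitRel (zpowers τ) α = SameCycle.setoid τ := by
  ext x y
  rw [orbitRel_apply, mem_orbit_iff]
  constructor
  · rintro ⟨⟨g, hg⟩, rfl⟩
    obtain ⟨i, rfl⟩ := mem_zpowers_iff.mp hg
    exact SameCycle.symm ⟨i, rfl⟩
  · intro hxy
    obtain ⟨i, rfl⟩ := hxy.symm
    exact ⟨⟨τ ^ i, zpow_mem_zpowers τ i⟩, rfl⟩

theorem sameCycle_mul_le_orbitRel (σ ρ : Perm α) :
    SameCycle.setoid (σ * ρ) ≤ orbitRel (closure {σ, ρ}) α := by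
  rw [← orbitRel_zpowers, zpowers_eq_closure]
  refine orbitRel_closure_le fun g hg x => ?_
  rw [Set.mem_singleton_iff.mp hg]
  exact Setoid.trans' _ (orbitRel_closure_of_mem (by simp) (ρ x))
    (orbitRel_closure_of_mem (by simp) x)

theorem permOrbits_eq_card_quotient [Fintype α] (τ : Perm α) :
    permOrbits τ = Nat.card (Quotient (SameCycle.setoid τ)) := by
  unfold permOrbits orbitRel.Quotient
  rw [orbitRel_zpowers]

theorem iff_of_orbitRel_closure {S : Set (Perm α)} {p : α → Prop}
    (h : ∀ g ∈ S, ∀ z, p (g z) ↔ p z) {x y : α} (hxy : orbitRel (closure S) α x y) :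
    p x ↔ p y :=
  eq_iff_iff.mp (orbitRel_closure_le (r := Setoid.ker p) (fun g hg z => propext (h g hg z)) hxy)

noncomputable def numOrbits (S : Set (Perm α)) : ℕ :=
  Nat.card (orbitRel.Quotient (closure S) α)

theorem numOrbits_congr {S T : Set (Perm α)}
    (h : orbitRel (closure S) α = orbitRel (closure T) α) : numOrbits S = numOrbits T := by
  unfold numOrbits orbitRel.Quotient
  rw [h]

variable [DecidableEq α] {a b : α}

theorem numOrbits_insert_swap_of_orbitRel {S : Set (Perm α)} (h : orbitRel (closure S) α a b) :
    numOrbits (insert (swap a b) S) = numOrbits S := by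
  refine numOrbits_congr (le_antisymm (orbitRel_closure_le ?_) (orbitRel_closure_le ?_))
  · rintro g (rfl | hg)
    · exact Setoid.rel_swap_apply h
    · exact orbitRel_closure_of_mem hg
  · exact fun g hg => orbitRel_closure_of_mem (Set.mem_insert_of_mem _ hg)

theorem numOrbits_eq_numOrbits_insert_swap_add_one [Finite α] {S : Set (Perm α)}
    (h : ¬ orbitRel (closure S) α a b) :
    numOrbits S = numOrbits (insert (swap a b) S) + 1 := by
  refine Setoid.card_quotient_eq_add_one (a := a) (b := b) ?_ ?_ h ?_
  · exact orbitRel_closure_le fun g hg => orbitRel_closure_of_mem (Set.mem_insert_of_mem _ hg)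
  · simpa using orbitRel_closure_of_mem (Set.mem_insert (swap a b) S) b
  · intro x y hxy hxa hxb
    -- the class of `x` avoids `a` and `b`, so every generator preserves it
    refine (iff_of_orbitRel_closure (p := orbitRel (closure S) α x) ?_ hxy).mp (Setoid.refl' _ x)
    rintro g (rfl | hg) z
    · exact swap_apply_iff_of_not (p := orbitRel (closure S) α x) hxa hxb z
    · have hgz := orbitRel_closure_of_mem hg z
      exact ⟨fun h => Setoid.trans' _ h hgz, fun h => Setoid.trans' _ h (Setoid.symm' _ hgz)⟩

/-- The two sets generate different groups in general, but with the same orbits. -/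
theorem numOrbits_pair_mul_swap {σ ρ : Perm α} (hb : ρ b = b) :
    numOrbits {σ, ρ * swap a b} = numOrbits (insert (swap a b) {σ, ρ}) := by
  have hρswap : (ρ * swap a b) a = b := by simp [hb]
  refine numOrbits_congr (le_antisymm (orbitRel_closure_le ?_) (orbitRel_closure_le ?_))
  · rintro g (hg | hg) x <;> rw [hg]
    · exact orbitRel_closure_of_mem (by simp) x
    · exact Setoid.trans' _ (orbitRel_closure_of_mem (by simp) (swap a b x))
        (orbitRel_closure_of_mem (Set.mem_insert _ _) x)
  · have hab : orbitRel (closure {σ, ρ * swap a b}) α a b := by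
      simpa [hρswap] using Setoid.symm' _ (orbitRel_closure_of_mem
        (S := {σ, ρ * swap a b}) (g := ρ * swap a b) (by simp) a)
    rintro g (hg | hg | hg) x <;> rw [hg]
    · exact Setoid.rel_swap_apply hab x
    · exact orbitRel_closure_of_mem (by simp) x
    · have := orbitRel_closure_of_mem (S := {σ, ρ * swap a b}) (g := ρ * swap a b) (by simp)
        (swap a b x)
      rw [mul_apply, swap_apply_self] at this
      exact Setoid.trans' _ this (Setoid.rel_swap_apply hab x)


theorem permOrbits_eq_permOrbits_mul_swap_add_one [Fintype α] {τ : Perm α}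
    (h : ¬ τ.SameCycle a b) : permOrbits τ = permOrbits (τ * swap a b) + 1 := by
  have hab' : (τ * swap a b).SameCycle a b := sameCycle_mul_swap_of_not_sameCycle h
  rw [permOrbits_eq_card_quotient, permOrbits_eq_card_quotient]
  refine Setoid.card_quotient_eq_add_one (a := a) (b := b) ?_ hab' h ?_
  · rw [← orbitRel_zpowers, zpowers_eq_closure]
    refine orbitRel_closure_le fun g hg x => ?_
    rw [Set.mem_singleton_iff.mp hg]
    show (τ * swap a b).SameCycle (τ x) x
    rw [show τ x = (τ * swap a b) (swap a b x) by simp, sameCycle_apply_left]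
    exact Setoid.rel_swap_apply (r := SameCycle.setoid _) hab' x
  · intro x y hxy hxa hxb
    rw [← orbitRel_zpowers, zpowers_eq_closure] at hxy
    refine (iff_of_orbitRel_closure (p := τ.SameCycle x) ?_ hxy).mp (SameCycle.refl τ x)
    rintro g rfl z
    rw [mul_apply, sameCycle_apply_right]
    exact swap_apply_iff_of_not hxa hxb z

theorem permOrbits_mul_swap [Fintype α] {τ : Perm α} (hab : a ≠ b) :
    permOrbits (τ * swap a b) = permOrbits τ + 1 ∨
      permOrbits τ = permOrbits (τ * swap a b) + 1 := by
  by_cases h : τ.SameCycle a b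
  · left
    simpa using permOrbits_eq_permOrbits_mul_swap_add_one
      (not_sameCycle_mul_swap_of_sameCycle hab h)
  · exact Or.inr (permOrbits_eq_permOrbits_mul_swap_add_one h)

theorem abs_two_mul_numOrbits_sub_permOrbits_mul_swap [Fintype α] {σ ρ : Perm α} (hab : a ≠ b)
    (hb : ρ b = b) :
    |(2 * numOrbits {σ, ρ * swap a b} - permOrbits (σ * (ρ * swap a b)) : ℤ) -
      (2 * numOrbits {σ, ρ} - permOrbits (σ * ρ))| = 1 := by
  rw [← mul_assoc, abs_eq zero_le_one]
  by_cases hconn : orbitRel (closure {σ, ρ}) α a b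
  · have hk : numOrbits {σ, ρ * swap a b} = numOrbits {σ, ρ} :=
      (numOrbits_pair_mul_swap hb).trans (numOrbits_insert_swap_of_orbitRel hconn)
    have hbc := permOrbits_mul_swap (τ := σ * ρ) hab
    omega
  · have hk : numOrbits {σ, ρ} = numOrbits {σ, ρ * swap a b} + 1 := by
      rw [numOrbits_pair_mul_swap hb]
      exact numOrbits_eq_numOrbits_insert_swap_add_one hconn
    -- cycles of `σ * ρ` lie inside orbits of `⟨σ, ρ⟩`, so the swap merges two cycles
    have hbc : permOrbits (σ * ρ) = permOrbits (σ * ρ * swap a b) + 1 :=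
      permOrbits_eq_permOrbits_mul_swap_add_one fun h => hconn (sameCycle_mul_le_orbitRel σ ρ h)
    omega

end Orbits

section RibbonGraph

variable {H : Type*} [DecidableEq H] {θ : Perm H} {S : Finset H} {a : H}

theorem restrictPerm_apply (hS : ∀ x ∈ S, θ x ∈ S) (hinv : ∀ x, θ (θ x) = x) (x : H) :
    restrictPerm θ S x = if x ∈ S then θ x else x := by
  rw [restrictPerm, dif_pos ⟨hS, hinv⟩]
  rfl

theorem restrictPerm_empty (θ : Perm H) : restrictPerm θ ∅ = 1 := by
  unfold restrictPerm
  split_ifs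
  · ext x
    simp only [Finset.notMem_empty, if_false]
    rfl
  · rfl

theorem sdiff_edge_closed (hinv : ∀ x, θ (θ x) = x) (hS : ∀ x ∈ S, θ x ∈ S) :
    ∀ x ∈ S \ {a, θ a}, θ x ∈ S \ {a, θ a} := by
  intro x hx
  simp only [Finset.mem_sdiff, Finset.mem_insert, Finset.mem_singleton] at hx ⊢
  refine ⟨hS x hx.1, fun h => hx.2 ?_⟩
  rcases h with h | h
  · exact Or.inr (by rw [← h, hinv])
  · exact Or.inl (by rw [← hinv x, h, hinv])

theorem restrictPerm_eq_restrictPerm_sdiff_edge_mul_swap (hinv : ∀ x, θ (θ x) = x)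
    (hS : ∀ x ∈ S, θ x ∈ S) (ha : a ∈ S) :
    restrictPerm θ S = restrictPerm θ (S \ {a, θ a}) * swap a (θ a) := by
  ext x
  rw [mul_apply, restrictPerm_apply hS hinv, restrictPerm_apply (sdiff_edge_closed hinv hS) hinv]
  rcases eq_or_ne x a with rfl | hxa
  · simp [ha]
  rcases eq_or_ne x (θ a) with rfl | hxb
  · simp [hS _ ha, hinv]
  · simp [swap_apply_of_ne_of_ne hxa hxb, hxa, hxb]

theorem restrictPerm_sdiff_edge_apply_right (hinv : ∀ x, θ (θ x) = x)
    (hS : ∀ x ∈ S, θ x ∈ S) : restrictPerm θ (S \ {a, θ a}) (θ a) = θ a := by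
  simp [restrictPerm_apply (sdiff_edge_closed hinv hS) hinv]

theorem edge_subset (hS : ∀ x ∈ S, θ x ∈ S) (ha : a ∈ S) : {a, θ a} ⊆ S :=
  Finset.insert_subset ha (Finset.singleton_subset_iff.mpr (hS a ha))

theorem eCount_sdiff_edge (hS : ∀ x ∈ S, θ x ∈ S) (hfp : θ a ≠ a) (ha : a ∈ S) :
    eCount S = eCount (S \ {a, θ a}) + 1 := by
  have hsub := edge_subset hS ha
  have hcard := Finset.card_sdiff_of_subset hsub
  have hpair : ({a, θ a} : Finset H).card = 2 := Finset.card_pair hfp.symm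
  have hle := Finset.card_le_card hsub
  simp only [eCount]
  omega

end RibbonGraph

section ZExponent

variable {H : Type*} [Fintype H] [DecidableEq H] (σ θ : Perm H)

noncomputable def zExponent (S : Finset H) : ℤ :=
  kCount σ θ S - bcCount σ θ S + nCount σ θ S

theorem zExponent_eq (S : Finset H) :
    zExponent σ θ S = 2 * kCount σ θ S - bcCount σ θ S + eCount S - vCount σ := by
  simp only [zExponent, nCount, rCount]
  ring

theorem zExponent_empty : zExponent σ θ ∅ = 0 := by
  have hk : kCount σ θ ∅ = vCount σ := by
    rw [kCount, restrictPerm_empty, Set.pair_comm, closure_insert_one, ← zpowers_eq_closure]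
    rfl
  have hbc : bcCount σ θ ∅ = vCount σ := by
    rw [bcCount, restrictPerm_empty, mul_one]
    rfl
  rw [zExponent_eq, hk, hbc, eCount, Finset.card_empty]
  push_cast
  ring

variable {σ θ}

theorem zExponent_sdiff_edge (hinv : ∀ x, θ (θ x) = x) (hfp : ∀ x, θ x ≠ x) {S : Finset H}
    (hS : ∀ x ∈ S, θ x ∈ S) {a : H} (ha : a ∈ S) :
    zExponent σ θ S = zExponent σ θ (S \ {a, θ a}) ∨
      zExponent σ θ S = zExponent σ θ (S \ {a, θ a}) + 2 := by
  have hdelta := abs_two_mul_numOrbits_sub_permOrbits_mul_swap (σ := σ) (hfp a).symm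
    (restrictPerm_sdiff_edge_apply_right hinv hS)
  rw [← restrictPerm_eq_restrictPerm_sdiff_edge_mul_swap hinv hS ha, abs_eq zero_le_one] at hdelta
  have he := eCount_sdiff_edge hS (hfp a) ha
  simp only [zExponent_eq, kCount, bcCount]
  unfold numOrbits at hdelta
  omega

end ZExponent

/-- **Evenness and nonnegativity of the `z`-exponent of the Bollobás–Riordan
polynomial.**  For an orientable ribbon graph encoded by a combinatorial map
`(H, σ, θ)` and every spanning subgraph `F ⊆ E` (encoded by a `θ`-invariant set `S`
of half-edges), the integer `k(F) - bc(F) + n(F)` is nonnegative and even (it is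
twice the genus of the orientable surface `F`). -/
theorem z_exponent_nonneg_and_even
    {H : Type*} [Fintype H] [DecidableEq H] (σ θ : Equiv.Perm H)
    (hinv : ∀ a, θ (θ a) = a) (hfp : ∀ a, θ a ≠ a) :
    ∀ S : Finset H, (∀ a ∈ S, θ a ∈ S) →
      0 ≤ (kCount σ θ S : ℤ) - (bcCount σ θ S : ℤ) + nCount σ θ S ∧
      2 ∣ ((kCount σ θ S : ℤ) - (bcCount σ θ S : ℤ) + nCount σ θ S) := by
  suffices h : ∀ S : Finset H, (∀ a ∈ S, θ a ∈ S) → ∃ g : ℕ, zExponent σ θ S = 2 * g by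
    intro S hS
    obtain ⟨g, hg⟩ := h S hS
    exact ⟨show 0 ≤ zExponent σ θ S by rw [hg]; positivity, g, hg⟩
  intro S
  induction S using Finset.strongInduction with
  | H S ih =>
    intro hS
    rcases S.eq_empty_or_nonempty with rfl | ⟨a, ha⟩
    · exact ⟨0, zExponent_empty σ θ⟩
    obtain ⟨g, hg⟩ := ih _ (Finset.sdiff_ssubset (edge_subset hS ha) ⟨a, by simp⟩)
      (sdiff_edge_closed hinv hS)
    rcases zExponent_sdiff_edge hinv hfp hS ha with h | h
    · exact ⟨g, h.trans hg⟩
    · exact ⟨g + 1, by rw [h, hg]; push_cast; ring⟩
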